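/- arXiv:1310.4993 — 4 statements merged into one kernel-verified Lean document; each statement's English description precedes it below -/
import Mathlib

section
/- Let M ≥ 2 and let H_{i,j} for i, j ∈ {1,2,3} with i ≠ j be invertible M×M complex matrices. Set T = H₂₃⁻¹H₂₁H₃₁⁻¹H₃₂H₁₂⁻¹H₁₃. Let Q₃ be an M×(M−1) complex matrix each of whose columns is an eigenvector of T (for each column q there is λ ∈ ℂ with T q = λ q), and define Q₁ = H₂₁⁻¹H₂₃Q₃ and Q₂ = H₁₂⁻¹H₁₃Q₃. Then the interference at every receiver is confined to at most M−1 dimensions: rank[H₁₂Q₂ | H₁₃Q₃] ≤ M−1, rank[H₂₁Q₁ | H₂₃Q₃] ≤ M−1, and rank[H₃₁Q₁ | H₃₂Q₂] ≤ M−1. -/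
open Matrix

/-!
With `Q₁, Q₂` defined as they are, interference at receivers 1 and 2 lines up exactly:
`H₁₂Q₂ = H₁₃Q₃` and `H₂₁Q₁ = H₂₃Q₃`. At receiver 3, `H₃₂Q₂ = (H₃₁H₂₁⁻¹H₂₃) T Q₃` and
`H₃₁Q₁ = (H₃₁H₂₁⁻¹H₂₃) Q₃`; since the columns of `Q₃` are eigenvectors of `T`, `T Q₃ = Q₃ Λ`
with `Λ` diagonal, so `H₃₂Q₂ = H₃₁Q₁ Λ`. In every case the interference matrix has the form
`[A | A D] = A [1 | D]` with `A` of width `M - 1`, hence rank at most `M - 1`.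
-/

namespace Matrix

variable {m n n' R : Type*} [Fintype n] [DecidableEq n]

theorem rank_fromCols_self_mul_le [Fintype n'] [CommSemiring R] [StrongRankCondition R]
    (A : Matrix m n R) (D : Matrix n n' R) :
    (fromCols A (A * D)).rank ≤ Fintype.card n :=
  calc (fromCols A (A * D)).rank = (A * fromCols 1 D).rank := by
        rw [mul_fromCols, Matrix.mul_one]
    _ ≤ A.rank := rank_mul_le_left _ _
    _ ≤ Fintype.card n := rank_le_card_width _

theorem rank_fromCols_self_le [CommSemiring R] [StrongRankCondition R] (A : Matrix m n R) :
    (fromCols A A).rank ≤ Fintype.card n := by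
  have h := rank_fromCols_self_mul_le A (1 : Matrix n n R)
  rwa [Matrix.mul_one] at h

theorem exists_mul_eq_mul_diagonal_of_forall_col_eigen [Fintype m] [CommSemiring R]
    (T : Matrix m m R) (Q : Matrix m n R)
    (hQ : ∀ c, ∃ lam : R, T *ᵥ (fun r => Q r c) = lam • fun r => Q r c) :
    ∃ d : n → R, T * Q = Q * diagonal d := by
  choose d hd using hQ
  refine ⟨d, ext fun r c => ?_⟩
  have h := congrFun (hd c) r
  simp only [mulVec, dotProduct, Pi.smul_apply, smul_eq_mul] at h
  rw [mul_diagonal, mul_apply, h, mul_comm]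

end Matrix

theorem fia_3user_mimo_alignment_general {M : ℕ}
    (H12 H13 H21 H23 H31 H32 : Matrix (Fin M) (Fin M) ℂ)
    (h12 : IsUnit H12) (h21 : IsUnit H21)
    (h23 : IsUnit H23) (h31 : IsUnit H31)
    (Q3 : Matrix (Fin M) (Fin (M - 1)) ℂ)
    (hQ3 : ∀ c : Fin (M - 1), ∃ lam : ℂ,
      (H23⁻¹ * H21 * H31⁻¹ * H32 * H12⁻¹ * H13) *ᵥ (fun r => Q3 r c) =
        lam • (fun r => Q3 r c))
    (Q1 Q2 : Matrix (Fin M) (Fin (M - 1)) ℂ)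
    (hQ1 : Q1 = H21⁻¹ * H23 * Q3) (hQ2 : Q2 = H12⁻¹ * H13 * Q3) :
    (fromCols (H12 * Q2) (H13 * Q3)).rank ≤ M - 1 ∧
    (fromCols (H21 * Q1) (H23 * Q3)).rank ≤ M - 1 ∧
    (fromCols (H31 * Q1) (H32 * Q2)).rank ≤ M - 1 := by
  rw [isUnit_iff_isUnit_det] at h12 h21 h23 h31
  have rx1 : H12 * Q2 = H13 * Q3 := by
    rw [hQ2, Matrix.mul_assoc, mul_nonsing_inv_cancel_left _ _ h12]
  have rx2 : H21 * Q1 = H23 * Q3 := by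
    rw [hQ1, Matrix.mul_assoc, mul_nonsing_inv_cancel_left _ _ h21]
  obtain ⟨Λ, hΛ⟩ := exists_mul_eq_mul_diagonal_of_forall_col_eigen _ _ hQ3
  have rx3 : H32 * Q2 = H31 * Q1 * diagonal Λ := by
    calc H32 * Q2 = H31 * H21⁻¹ * H23 * (H23⁻¹ * H21 * H31⁻¹ * H32 * H12⁻¹ * H13 * Q3) := by
          simp only [hQ2, Matrix.mul_assoc, mul_nonsing_inv_cancel_left _ _ h23,
            nonsing_inv_mul_cancel_left _ _ h21, mul_nonsing_inv_cancel_left _ _ h31]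
      _ = H31 * Q1 * diagonal Λ := by rw [hΛ, hQ1]; simp only [Matrix.mul_assoc]
  refine ⟨?_, ?_, ?_⟩
  · simpa [rx1] using rank_fromCols_self_le (H13 * Q3)
  · simpa [rx2] using rank_fromCols_self_le (H23 * Q3)
  · simpa [rx3] using rank_fromCols_self_mul_le (H31 * Q1) (diagonal Λ)

/-- FIA alignment for the 3-user MIMO IC: with precoders of dimension `M × (M-1)`
built from `M-1` eigenvectors of `T = H₂₃⁻¹H₂₁H₃₁⁻¹H₃₂H₁₂⁻¹H₁₃`, the interference
at every receiver is confined to at most `M-1` dimensions. -/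
theorem fia_3user_mimo_alignment {M : ℕ} (hM : 2 ≤ M)
    (H12 H13 H21 H23 H31 H32 : Matrix (Fin M) (Fin M) ℂ)
    (h12 : IsUnit H12) (h13 : IsUnit H13) (h21 : IsUnit H21)
    (h23 : IsUnit H23) (h31 : IsUnit H31) (h32 : IsUnit H32)
    (Q3 : Matrix (Fin M) (Fin (M - 1)) ℂ)
    (hQ3 : ∀ c : Fin (M - 1), ∃ lam : ℂ,
      (H23⁻¹ * H21 * H31⁻¹ * H32 * H12⁻¹ * H13) *ᵥ (fun r => Q3 r c) =
        lam • (fun r => Q3 r c))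
    (Q1 Q2 : Matrix (Fin M) (Fin (M - 1)) ℂ)
    (hQ1 : Q1 = H21⁻¹ * H23 * Q3) (hQ2 : Q2 = H12⁻¹ * H13 * Q3) :
    (fromCols (H12 * Q2) (H13 * Q3)).rank ≤ M - 1 ∧
    (fromCols (H21 * Q1) (H23 * Q3)).rank ≤ M - 1 ∧
    (fromCols (H31 * Q1) (H32 * Q2)).rank ≤ M - 1 :=
  fia_3user_mimo_alignment_general H12 H13 H21 H23 H31 H32 h12 h21 h23 h31 Q3 hQ3 Q1 Q2 hQ1 hQ2
end

section
/- Let R̃ be an M×M Hermitian positive semidefinite complex matrix and let v ∈ ℂ^M be a vector that does not lie in the range (column space) of R̃. Then for every t > 0 the matrix R̃ + t·I is positive definite (hence invertible), and the real quadratic form vᴴ(R̃ + t·I)⁻¹v tends to +∞ as t → 0⁺. -/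
open Matrix Filter
open scoped ComplexOrder

/-!
Split `v = y + w` orthogonally with `y ∈ range R` and `w ∈ (range R)ᗮ = ker R`; since
`v ∉ range R`, `w ≠ 0`. Then `w` is an eigenvector of `(R + tI)⁻¹` for the eigenvalue `t⁻¹` and
is orthogonal to `y`, so `vᴴ(R + tI)⁻¹v = yᴴ(R + tI)⁻¹y + ‖w‖² / t ≥ ‖w‖² / t`, which tends
to `+∞` as `t → 0⁺`.
-/

namespace Matrix

theorem inv_mulVec_eq_inv_smul {n K : Type*} [Fintype n] [DecidableEq n] [Field K]
    {A : Matrix n n K} (hA : IsUnit A) {a : K} (ha : a ≠ 0) {w : n → K}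
    (hw : A *ᵥ w = a • w) : A⁻¹ *ᵥ w = a⁻¹ • w :=
  letI := hA.invertible
  inv_mulVec_eq_vec (by rw [mulVec_smul, hw, smul_smul, inv_mul_cancel₀ ha, one_smul])

theorem IsHermitian.dotProduct_mulVec_add_of_mulVec_eq_smul {n α : Type*} [Fintype n]
    [CommRing α] [StarRing α] {B : Matrix n n α} (hB : B.IsHermitian) {y w : n → α} {b : α}
    (hw : B *ᵥ w = b • w) (hwy : star w ⬝ᵥ y = 0) :
    star (y + w) ⬝ᵥ (B *ᵥ (y + w)) = star y ⬝ᵥ (B *ᵥ y) + b * (star w ⬝ᵥ w) := by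
  have hyw : star y ⬝ᵥ w = 0 := by rw [star_dotProduct, hwy, star_zero]
  have hcross : star w ⬝ᵥ (B *ᵥ y) = 0 := by
    rw [dotProduct_mulVec, ← hB.eq, ← star_mulVec, hw, star_smul, smul_dotProduct, hwy,
      smul_zero]
  simp only [star_add, mulVec_add, hw, add_dotProduct, dotProduct_add, dotProduct_smul, hyw,
    hcross, smul_eq_mul, add_zero, zero_add]

theorem PosSemidef.posDef_add_smul_one {𝕜 n : Type*} [RCLike 𝕜] [DecidableEq n]
    {R : Matrix n n 𝕜} (hR : R.PosSemidef) {a : 𝕜} (ha : 0 < a) : (R + a • 1).PosDef :=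
  PosDef.posSemidef_add hR (PosDef.one.smul ha)

section RCLike

variable {𝕜 n : Type*} [RCLike 𝕜] [Fintype n] [DecidableEq n]

theorem IsHermitian.exists_orthogonal_add_of_notMem_range {R : Matrix n n 𝕜}
    (hR : R.IsHermitian) {v : n → 𝕜} (hv : v ∉ LinearMap.range R.mulVecLin) :
    ∃ y w, v = y + w ∧ R *ᵥ w = 0 ∧ star w ⬝ᵥ y = 0 ∧ w ≠ 0 := by
  obtain ⟨y, ⟨u, hu⟩, w, hw, hvyw⟩ :=
    (LinearMap.range R.toEuclideanLin).exists_add_mem_mem_orthogonal (WithLp.toLp 2 v)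
  have hwy : star w.ofLp ⬝ᵥ y.ofLp = 0 := by
    rw [dotProduct_comm]
    exact Submodule.inner_left_of_mem_orthogonal (LinearMap.mem_range.mpr ⟨u, hu⟩) hw
  rw [(isSymmetric_toEuclideanLin_iff.mpr hR).orthogonal_range] at hw
  refine ⟨y.ofLp, w.ofLp, congrArg WithLp.ofLp hvyw, congrArg WithLp.ofLp hw, hwy,
    fun hw0 ↦ hv ⟨u.ofLp, (congrArg WithLp.ofLp hu).trans ?_⟩⟩
  simpa [hw0] using (congrArg WithLp.ofLp hvyw).symm

theorem PosSemidef.le_re_dotProduct_inv_add_smul_one_mulVec {R : Matrix n n 𝕜}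
    (hR : R.PosSemidef) {t : ℝ} (ht : 0 < t) {y w : n → 𝕜} (hw : R *ᵥ w = 0)
    (hwy : star w ⬝ᵥ y = 0) :
    t⁻¹ * RCLike.re (star w ⬝ᵥ w) ≤
      RCLike.re (star (y + w) ⬝ᵥ ((R + (t : 𝕜) • 1)⁻¹ *ᵥ (y + w))) := by
  have hA : (R + (t : 𝕜) • 1).PosDef := hR.posDef_add_smul_one (RCLike.ofReal_pos.mpr ht)
  have hAw : (R + (t : 𝕜) • 1) *ᵥ w = (t : 𝕜) • w := by
    rw [add_mulVec, hw, zero_add, smul_mulVec, one_mulVec]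
  have hA_inv_w := inv_mulVec_eq_inv_smul hA.isUnit (RCLike.ofReal_ne_zero.mpr ht.ne') hAw
  rw [hA.inv.isHermitian.dotProduct_mulVec_add_of_mulVec_eq_smul hA_inv_w hwy, map_add,
    ← RCLike.ofReal_inv, RCLike.re_ofReal_mul]
  exact le_add_of_nonneg_left
    (RCLike.nonneg_iff.mp (hA.inv.posSemidef.dotProduct_mulVec_nonneg y)).1

theorem PosSemidef.tendsto_re_dotProduct_inv_add_smul_one_mulVec {R : Matrix n n 𝕜}
    (hR : R.PosSemidef) {v : n → 𝕜} (hv : v ∉ LinearMap.range R.mulVecLin) :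
    Tendsto (fun t : ℝ ↦ RCLike.re (star v ⬝ᵥ ((R + (t : 𝕜) • 1)⁻¹ *ᵥ v)))
      (nhdsWithin 0 (Set.Ioi 0)) atTop := by
  obtain ⟨y, w, rfl, hw, hwy, hw0⟩ := hR.isHermitian.exists_orthogonal_add_of_notMem_range hv
  have hc : 0 < RCLike.re (star w ⬝ᵥ w) :=
    (RCLike.pos_iff.mp (dotProduct_star_self_pos_iff.mpr hw0)).1
  refine tendsto_atTop_mono' _ ?_ (tendsto_inv_nhdsGT_zero.atTop_mul_const hc)
  filter_upwards [self_mem_nhdsWithin] with t ht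
  exact hR.le_re_dotProduct_inv_add_smul_one_mulVec ht hw hwy

end RCLike

end Matrix

/-- Core of Lemma 1 of the FIA paper: if `v` is not in the range of the positive
semidefinite interference covariance `R̃`, then `R̃ + tI` is positive definite for all
`t > 0` and the distance metric `vᴴ(R̃ + tI)⁻¹v` diverges to `+∞` as `t → 0⁺`. -/
theorem quadratic_form_inv_tendsto_atTop {M : ℕ}
    (R : Matrix (Fin M) (Fin M) ℂ) (hR : R.PosSemidef)
    (v : Fin M → ℂ) (hv : v ∉ LinearMap.range R.mulVecLin) :
    (∀ t : ℝ, 0 < t → (R + (t : ℂ) • (1 : Matrix (Fin M) (Fin M) ℂ)).PosDef) ∧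
    Tendsto (fun t : ℝ => (star v ⬝ᵥ ((R + (t : ℂ) • 1)⁻¹ *ᵥ v)).re)
      (nhdsWithin 0 (Set.Ioi 0)) atTop :=
  ⟨fun _ ht ↦ hR.posDef_add_smul_one (Complex.zero_lt_real.mpr ht),
    hR.tendsto_re_dotProduct_inv_add_smul_one_mulVec hv⟩
end

section
/- Define the Gaussian tail function Q(x) = ∫ₓ^∞ (1/√(2π)) e^{−u²/2} du. Let R̃ be an M×M Hermitian positive semidefinite complex matrix and let v₁, …, v_P ∈ ℂ^M be finitely many vectors, each of which does not lie in the range (column space) of R̃. Then Σ_{p=1}^P Q(√(v_pᴴ(R̃ + σ²·I)⁻¹v_p)) → 0 as σ² → 0⁺. -/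
/-! Since `R` is Hermitian, `range R = (ker R)ᗮ`, so some `w ∈ ker R` has `wᴴv ≠ 0`. For
`B = R + sI` and `x = B⁻¹v` one gets `wᴴv = s·wᴴx` and `vᴴB⁻¹v = xᴴBx ≥ s‖x‖²`, hence by
Cauchy–Schwarz `vᴴB⁻¹v ≥ |wᴴv|² / (s‖w‖²) → ∞` as `s → 0⁺`, and `Q` vanishes at infinity. -/

open Matrix Filter
open scoped ComplexOrder

/-- The Gaussian tail function `Q(x) = ∫ₓ^∞ (1/√(2π)) e^(−u²/2) du`. -/
noncomputable def gaussQ (x : ℝ) : ℝ :=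
  ∫ u in Set.Ioi x, (Real.sqrt (2 * Real.pi))⁻¹ * Real.exp (-(u ^ 2) / 2)

lemma tendsto_gaussQ_atTop_zero : Tendsto gaussQ atTop (nhds 0) :=
  MeasureTheory.tendsto_integral_Ioi_zero tendsto_id

namespace Matrix

variable {𝕜 n : Type*} [RCLike 𝕜] [Fintype n]

open WithLp in
lemma sq_norm_star_dotProduct_le (w x : n → 𝕜) :
    ‖star w ⬝ᵥ x‖ ^ 2 ≤ RCLike.re (star w ⬝ᵥ w) * RCLike.re (star x ⬝ᵥ x) := by
  have h := inner_mul_inner_self_le (𝕜 := 𝕜) (toLp 2 w : EuclideanSpace 𝕜 n) (toLp 2 x)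
  rw [norm_inner_symm (toLp 2 x), ← sq] at h
  simpa only [EuclideanSpace.inner_toLp_toLp, dotProduct_comm _ (star _)] using h

lemma IsHermitian.exists_mulVec_eq_zero_star_dotProduct_ne_zero [DecidableEq n]
    {R : Matrix n n 𝕜} (hR : R.IsHermitian) {v : n → 𝕜}
    (hv : v ∉ LinearMap.range R.mulVecLin) :
    ∃ w, R *ᵥ w = 0 ∧ star w ⬝ᵥ v ≠ 0 := by
  by_contra! h
  set T := toEuclideanLin R
  have hT : T.IsSymmetric := isSymmetric_toEuclideanLin_iff.mpr hR
  have hv_perp : WithLp.toLp 2 v ∈ (LinearMap.ker T)ᗮ := by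
    intro u hu
    exact (dotProduct_comm _ _).trans (h _ (congrArg WithLp.ofLp hu))
  rw [← hT.orthogonal_range, Submodule.orthogonal_orthogonal] at hv_perp
  obtain ⟨y, hy⟩ := hv_perp
  exact hv ⟨WithLp.ofLp y, congrArg WithLp.ofLp hy⟩

variable [DecidableEq n]

lemma PosSemidef.sq_norm_star_dotProduct_le_of_mulVec_eq_zero {R : Matrix n n 𝕜}
    (hR : R.PosSemidef) {w : n → 𝕜} (hw : R *ᵥ w = 0) (v : n → 𝕜) {s : ℝ} (hs : 0 < s) :
    ‖star w ⬝ᵥ v‖ ^ 2 ≤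
      s * RCLike.re (star w ⬝ᵥ w) * RCLike.re (star v ⬝ᵥ ((R + (s : 𝕜) • 1)⁻¹ *ᵥ v)) := by
  set B := R + (s : 𝕜) • 1
  have hB : B.PosDef := PosDef.posSemidef_add hR (PosDef.one.smul (by exact_mod_cast hs))
  set x := B⁻¹ *ᵥ v
  have hBx : B *ᵥ x = v := by
    rw [mulVec_mulVec, mul_nonsing_inv _ ((isUnit_iff_isUnit_det B).mp hB.isUnit), one_mulVec]
  have hBx_eq : B *ᵥ x = R *ᵥ x + (s : 𝕜) • x := by
    rw [add_mulVec, smul_mulVec, one_mulVec]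
  have hwv : star w ⬝ᵥ v = s * (star w ⬝ᵥ x) := by
    have : star w ⬝ᵥ (R *ᵥ x) = 0 := by
      rw [dotProduct_mulVec, ← hR.isHermitian.eq, ← star_mulVec, hw, star_zero, zero_dotProduct]
    rw [← hBx, hBx_eq, dotProduct_add, this, dotProduct_smul, zero_add, smul_eq_mul]
  have hvx : s * RCLike.re (star x ⬝ᵥ x) ≤ RCLike.re (star v ⬝ᵥ x) := by
    have : star v ⬝ᵥ x = star x ⬝ᵥ (R *ᵥ x) + s * (star x ⬝ᵥ x) := by
      rw [← hBx, star_mulVec, hB.isHermitian.eq, ← dotProduct_mulVec, hBx_eq, dotProduct_add,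
        dotProduct_smul, smul_eq_mul]
    rw [this, map_add, RCLike.re_ofReal_mul]
    linarith [hR.re_dotProduct_nonneg x]
  have hw_nonneg : 0 ≤ RCLike.re (star w ⬝ᵥ w) := by
    simpa using PosSemidef.one.re_dotProduct_nonneg w
  calc ‖star w ⬝ᵥ v‖ ^ 2 = s ^ 2 * ‖star w ⬝ᵥ x‖ ^ 2 := by
        rw [hwv, norm_mul, RCLike.norm_ofReal, abs_of_pos hs, mul_pow]
    _ ≤ s ^ 2 * (RCLike.re (star w ⬝ᵥ w) * RCLike.re (star x ⬝ᵥ x)) :=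
        mul_le_mul_of_nonneg_left (sq_norm_star_dotProduct_le w x) (by positivity)
    _ = s * RCLike.re (star w ⬝ᵥ w) * (s * RCLike.re (star x ⬝ᵥ x)) := by ring
    _ ≤ s * RCLike.re (star w ⬝ᵥ w) * RCLike.re (star v ⬝ᵥ x) := by gcongr

open Topology in
lemma PosSemidef.tendsto_re_star_dotProduct_inv_add_smul_one_atTop {R : Matrix n n 𝕜}
    (hR : R.PosSemidef) {v : n → 𝕜} (hv : v ∉ LinearMap.range R.mulVecLin) :
    Tendsto (fun s : ℝ => RCLike.re (star v ⬝ᵥ ((R + (s : 𝕜) • 1)⁻¹ *ᵥ v))) (𝓝[>] 0) atTop := by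
  obtain ⟨w, hw, hwv⟩ := hR.isHermitian.exists_mulVec_eq_zero_star_dotProduct_ne_zero hv
  have hw_pos : 0 < RCLike.re (star w ⬝ᵥ w) := by
    simpa using PosDef.one.re_dotProduct_pos (fun h => hwv (by simp [h]))
  have hc : 0 < ‖star w ⬝ᵥ v‖ ^ 2 / RCLike.re (star w ⬝ᵥ w) := by positivity
  refine tendsto_atTop_mono' _ ?_ (tendsto_inv_nhdsGT_zero.const_mul_atTop hc)
  filter_upwards [self_mem_nhdsWithin] with s (hs : 0 < s)
  rw [div_mul_eq_mul_div, ← div_eq_mul_inv, div_div, div_le_iff₀ (by positivity), mul_comm]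
  exact hR.sq_norm_star_dotProduct_le_of_mulVec_eq_zero hw v hs

end Matrix

/-- Lemma 1 of the FIA paper: the union upper bound on the error probability of the
minimum-distance detector vanishes as the noise variance `σ² → 0⁺`, whenever none of
the received error-vector directions `v_p` lies in the range (column space) of the
positive semidefinite interference covariance `R̃`. -/
theorem union_bound_tendsto_zero {M P : ℕ}
    (R : Matrix (Fin M) (Fin M) ℂ) (hR : R.PosSemidef)
    (v : Fin P → Fin M → ℂ) (hv : ∀ p, v p ∉ LinearMap.range R.mulVecLin) :
    Tendsto
      (fun s : ℝ => ∑ p : Fin P,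
        gaussQ (Real.sqrt ((star (v p) ⬝ᵥ ((R + (s : ℂ) • 1)⁻¹ *ᵥ (v p))).re)))
      (nhdsWithin 0 (Set.Ioi 0)) (nhds 0) := by
  simpa only [Complex.coe_algebraMap, RCLike.re_to_complex, Function.comp_apply,
    Finset.sum_const_zero] using tendsto_finsetSum Finset.univ fun p _ =>
    tendsto_gaussQ_atTop_zero.comp <| Real.tendsto_sqrt_atTop.comp <|
      hR.tendsto_re_star_dotProduct_inv_add_smul_one_atTop (hv p)
end

section
/- Let M ≥ 2 and let H_{i,j} for i, j ∈ {1,2,3} with i ≠ j be invertible M×M complex matrices. Set T = H₂₃⁻¹H₂₁H₃₁⁻¹H₃₂H₁₂⁻¹H₁₃, let w ∈ ℂ^M, and define A = [Tw | ⋯ | T^{M−2}w], B = [Tw | ⋯ | T^{M−1}w], C = [w | ⋯ | T^{M−2}w], and the precoders Q₃ = A, Q₁ = H₂₁⁻¹H₂₃B, Q₂ = H₁₂⁻¹H₁₃C. Then H₃₁Q₁ = H₃₂Q₂ as matrices, and the interference at each of the three receivers occupies at most M−1 dimensions: rank[H₁₂Q₂ | H₁₃Q₃] ≤ M−1, rank[H₂₁Q₁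 | H₂₃Q₃] ≤ M−1, and rank[H₃₁Q₁ | H₃₂Q₂] ≤ M−1. -/
/-!
Since `B = T * C`, the alignment `H₃₁Q₁ = H₃₂Q₂` is the telescoping identity
`H₃₁H₂₁⁻¹H₂₃T = H₃₂H₁₂⁻¹H₁₃`. At receivers 1 and 2 the columns `T w, …, T^(M-2) w` of `Q₃`
are already columns of `C` and of `B` respectively, so after cancelling `H₁₂` (resp. `H₂₁`)
each interference matrix factors through a matrix with `M - 1` columns.
-/

open Matrix

namespace Matrix

variable {R : Type*} {m n o : Type*}

section Krylov

variable [Fintype m] [DecidableEq m] [Semiring R]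

def krylovMatrix (T : Matrix m m R) (w : m → R) (k n : ℕ) : Matrix m (Fin n) R :=
  of fun r c => (T ^ ((c : ℕ) + k) *ᵥ w) r

theorem mul_krylovMatrix (T : Matrix m m R) (w : m → R) (k n : ℕ) :
    T * krylovMatrix T w k n = krylovMatrix T w (k + 1) n := by
  ext r c
  change (T *ᵥ (T ^ ((c : ℕ) + k) *ᵥ w)) r = (T ^ ((c : ℕ) + (k + 1)) *ᵥ w) r
  rw [mulVec_mulVec, ← pow_succ', add_assoc]

theorem krylovMatrix_submatrix (T : Matrix m m R) (w : m → R) {k k' n n' : ℕ}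
    (f : Fin n → Fin n') (hf : ∀ c, (f c : ℕ) + k' = c + k) :
    (krylovMatrix T w k' n').submatrix id f = krylovMatrix T w k n := by
  ext r c
  simp only [krylovMatrix, submatrix_apply, id, of_apply, hf]

end Krylov

theorem mul_submatrix_id [Fintype m] [NonUnitalNonAssocSemiring R] {l : Type*}
    (H : Matrix l m R) (X : Matrix m n R) (f : o → n) :
    H * X.submatrix id f = (H * X).submatrix id f :=
  rfl

theorem rank_fromCols_submatrix_le [Fintype n] [DecidableEq n] [CommSemiring R]
    [StrongRankCondition R] [Fintype o] (X : Matrix m n R) (f : o → n) :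
    (fromCols X (X.submatrix id f)).rank ≤ X.rank := by
  have hfactor :
      fromCols X (X.submatrix id f) = X * fromCols 1 ((1 : Matrix n n R).submatrix id f) := by
    rw [mul_fromCols, Matrix.mul_one, mul_submatrix_id, Matrix.mul_one]
  rw [hfactor]
  exact rank_mul_le_left _ _

end Matrix

theorem fia_3user_siso_alignment_general {M : ℕ}
    (H12 H13 H21 H23 H31 H32 : Matrix (Fin M) (Fin M) ℂ)
    (h12 : IsUnit H12) (h21 : IsUnit H21)
    (h23 : IsUnit H23) (h31 : IsUnit H31)
    (w : Fin M → ℂ) :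
    let T := H23⁻¹ * H21 * H31⁻¹ * H32 * H12⁻¹ * H13
    let A : Matrix (Fin M) (Fin (M - 2)) ℂ :=
      Matrix.of fun r c => (T ^ ((c : ℕ) + 1) *ᵥ w) r
    let B : Matrix (Fin M) (Fin (M - 1)) ℂ :=
      Matrix.of fun r c => (T ^ ((c : ℕ) + 1) *ᵥ w) r
    let Cm : Matrix (Fin M) (Fin (M - 1)) ℂ :=
      Matrix.of fun r c => (T ^ (c : ℕ) *ᵥ w) r
    let Q3 := A
    let Q1 := H21⁻¹ * H23 * B
    let Q2 := H12⁻¹ * H13 * Cm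
    H31 * Q1 = H32 * Q2 ∧
    (fromCols (H12 * Q2) (H13 * Q3)).rank ≤ M - 1 ∧
    (fromCols (H21 * Q1) (H23 * Q3)).rank ≤ M - 1 ∧
    (fromCols (H31 * Q1) (H32 * Q2)).rank ≤ M - 1 := by
  intro T A B Cm Q3 Q1 Q2
  rw [isUnit_iff_isUnit_det] at h12 h21 h23 h31
  have hB : B = T * Cm := (mul_krylovMatrix T w 0 (M - 1)).symm
  have hA₁ : Q3 = Cm.submatrix id fun c : Fin (M - 2) => ⟨c + 1, by omega⟩ :=
    (krylovMatrix_submatrix T w _ fun c => rfl).symm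
  have hA₂ : Q3 = B.submatrix id (Fin.castLE (by omega)) :=
    (krylovMatrix_submatrix T w _ fun c => rfl).symm
  have hQ1 : H21 * Q1 = H23 * B := by
    simp only [Q1, Matrix.mul_assoc, mul_nonsing_inv_cancel_left _ _ h21]
  have hQ2 : H12 * Q2 = H13 * Cm := by
    simp only [Q2, Matrix.mul_assoc, mul_nonsing_inv_cancel_left _ _ h12]
  have halign : H31 * Q1 = H32 * Q2 := by
    simp only [Q1, Q2, hB, T, Matrix.mul_assoc, mul_nonsing_inv_cancel_left _ _ h23,
      nonsing_inv_mul_cancel_left _ _ h21, mul_nonsing_inv_cancel_left _ _ h31]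
  refine ⟨halign, ?_, ?_, ?_⟩
  · rw [hQ2, hA₁, mul_submatrix_id]
    exact (rank_fromCols_submatrix_le _ _).trans (rank_le_width _)
  · rw [hQ1, hA₂, mul_submatrix_id]
    exact (rank_fromCols_submatrix_le _ _).trans (rank_le_width _)
  · rw [← halign, ← submatrix_id_id (H31 * Q1)]
    exact (rank_fromCols_submatrix_le _ _).trans (rank_le_width _)

/-- Alignment part of Theorem 3 of the FIA paper (3-user SISO IC with symbol extension
`M`): with the Krylov precoders `Q₃ = [Tw|⋯|T^{M−2}w]`, `Q₁ = H₂₁⁻¹H₂₃[Tw|⋯|T^{M−1}w]`,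
`Q₂ = H₁₂⁻¹H₁₃[w|⋯|T^{M−2}w]`, one has `H₃₁Q₁ = H₃₂Q₂` and the interference at each
receiver occupies at most `M−1` dimensions. -/
theorem fia_3user_siso_alignment {M : ℕ} (hM : 2 ≤ M)
    (H12 H13 H21 H23 H31 H32 : Matrix (Fin M) (Fin M) ℂ)
    (h12 : IsUnit H12) (h13 : IsUnit H13) (h21 : IsUnit H21)
    (h23 : IsUnit H23) (h31 : IsUnit H31) (h32 : IsUnit H32)
    (w : Fin M → ℂ) :
    let T := H23⁻¹ * H21 * H31⁻¹ * H32 * H12⁻¹ * H13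
    let A : Matrix (Fin M) (Fin (M - 2)) ℂ :=
      Matrix.of fun r c => (T ^ ((c : ℕ) + 1) *ᵥ w) r
    let B : Matrix (Fin M) (Fin (M - 1)) ℂ :=
      Matrix.of fun r c => (T ^ ((c : ℕ) + 1) *ᵥ w) r
    let Cm : Matrix (Fin M) (Fin (M - 1)) ℂ :=
      Matrix.of fun r c => (T ^ (c : ℕ) *ᵥ w) r
    let Q3 := A
    let Q1 := H21⁻¹ * H23 * B
    let Q2 := H12⁻¹ * H13 * Cm
    H31 * Q1 = H32 * Q2 ∧
    (fromCols (H12 * Q2) (H13 * Q3)).rank ≤ M - 1 ∧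
    (fromCols (H21 * Q1) (H23 * Q3)).rank ≤ M - 1 ∧
    (fromCols (H31 * Q1) (H32 * Q2)).rank ≤ M - 1 :=
  fia_3user_siso_alignment_general H12 H13 H21 H23 H31 H32 h12 h21 h23 h31 w
end
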